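/- arXiv:1404.3493 — 2 statements merged into one kernel-verified Lean document; each statement's English description precedes it below -/
import Mathlib

section
/- For any real α > 1 and integer base b ≥ 2, the sum over all positive integers k of b^(-α·⌊log_b k⌋) equals b^α(b-1)/(b^α - b). -/
/-! The weight `b^{-α ⌊log_b k⌋}` is constant, equal to `b^{-α n}`, on each of the `(b - 1) b^n`
integers of the block `[b^n, b^{n+1})`, so the series is `(b - 1) Σ_n (b^{1-α})^n`, a geometric
series of ratio `b^{1-α} < 1`. -/

/-- `μ(α) = b^α (b-1) / (b^α - b)`. -/
noncomputable def mu (b : ℕ) (α : ℝ) : ℝ := (b : ℝ) ^ α * ((b : ℝ) - 1) / ((b : ℝ) ^ α - b)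

open Filter Topology Finset

theorem hasSum_of_tendsto_sum_range_comp {f : ℕ → ℝ} {g : ℕ → ℕ} {L : ℝ} (hf : ∀ n, 0 ≤ f n)
    (hg : Tendsto g atTop atTop) (h : Tendsto (fun N => ∑ i ∈ range (g N), f i) atTop (𝓝 L)) :
    HasSum f L := by
  have hbound : ∀ n, ∑ i ∈ range n, f i ≤ L := fun n =>
    ge_of_tendsto h <| (hg.eventually_ge_atTop n).mono fun N hN =>
      sum_le_sum_of_subset_of_nonneg (range_subset_range.2 hN) fun i _ _ => hf i
  have hsum : Summable f := summable_of_sum_range_le hf hbound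
  rw [← tendsto_nhds_unique (hsum.hasSum.tendsto_sum_nat.comp hg) h]
  exact hsum.hasSum

theorem sum_range_pow_eq_sum_log_blocks {M : Type*} [AddCommMonoid M] {b : ℕ} (hb : 0 < b)
    (g : ℕ → M) (N : ℕ) :
    ∑ k ∈ range (b ^ N), (if k = 0 then 0 else g (Nat.log b k)) =
      ∑ n ∈ range N, (b ^ (n + 1) - b ^ n) • g n := by
  induction N with
  | zero => simp
  | succ N ih =>
    have hblock :
        ∀ k ∈ Ico (b ^ N) (b ^ (N + 1)), (if k = 0 then 0 else g (Nat.log b k)) = g N := by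
      intro k hk
      obtain ⟨hlo, hhi⟩ := mem_Ico.1 hk
      rw [if_neg ((pow_pos hb N).trans_le hlo).ne', Nat.log_eq_of_pow_le_of_lt_pow hlo hhi]
    rw [← sum_range_add_sum_Ico _ (Nat.pow_le_pow_right hb N.le_succ), ih, sum_congr rfl hblock,
      sum_const, Nat.card_Ico, sum_range_succ]

theorem natCast_pow_succ_sub_pow_mul_rpow {b : ℕ} (hb : 0 < b) (α : ℝ) (n : ℕ) :
    ((b ^ (n + 1) - b ^ n : ℕ) : ℝ) * (b : ℝ) ^ (-(α * n)) =
      ((b : ℝ) - 1) * ((b : ℝ) ^ (1 - α)) ^ n := by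
  have hb0 : (0 : ℝ) < b := by exact_mod_cast hb
  have hexp : (b : ℝ) ^ ((1 - α) * n) = (b : ℝ) ^ (n : ℝ) * (b : ℝ) ^ (-(α * n)) := by
    rw [← Real.rpow_add hb0]
    ring_nf
  rw [Nat.cast_sub (Nat.pow_le_pow_right hb n.le_succ), ← Real.rpow_natCast _ n,
    ← Real.rpow_mul hb0.le, hexp, Real.rpow_natCast]
  push_cast [pow_succ]
  ring

theorem mu_eq_div_one_sub_rpow {b : ℕ} (hb : 1 < b) {α : ℝ} (hα : 1 < α) :
    mu b α = ((b : ℝ) - 1) / (1 - (b : ℝ) ^ (1 - α)) := by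
  have hb1 : (1 : ℝ) < b := by exact_mod_cast hb
  have hbα : (b : ℝ) < (b : ℝ) ^ α := by
    simpa using Real.rpow_lt_rpow_of_exponent_lt hb1 hα
  rw [mu, Real.rpow_sub (by linarith), Real.rpow_one, one_sub_div (by positivity)]
  field_simp

/-- For α > 1 and b ≥ 2, `Σ_{k ≥ 1} b^{-α ⌊log_b k⌋} = b^α(b-1)/(b^α - b)`. -/
theorem sum_walsh_weights (b : ℕ) (hb : 2 ≤ b) (α : ℝ) (hα : 1 < α) :
    (∑' k : ℕ, if k = 0 then (0 : ℝ) else (b : ℝ) ^ (-(α * (Nat.log b k : ℝ)))) = mu b α := by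
  have hb1 : (1 : ℝ) < b := by exact_mod_cast hb
  have hr : (b : ℝ) ^ (1 - α) < 1 := Real.rpow_lt_one_of_one_lt_of_neg hb1 (by linarith)
  have hgeom :=
    ((hasSum_geometric_of_lt_one (by positivity) hr).mul_left ((b : ℝ) - 1)).tendsto_sum_nat
  refine HasSum.tsum_eq ?_
  rw [mu_eq_div_one_sub_rpow hb hα]
  refine hasSum_of_tendsto_sum_range_comp (fun k => by split_ifs <;> positivity)
    (tendsto_pow_atTop_atTop_of_one_lt hb) ?_
  have hblocks : ∀ N,
      ∑ k ∈ range (b ^ N), (if k = 0 then (0 : ℝ) else (b : ℝ) ^ (-(α * Nat.log b k))) =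
        ∑ n ∈ range N, ((b : ℝ) - 1) * ((b : ℝ) ^ (1 - α)) ^ n := fun N =>
    (sum_range_pow_eq_sum_log_blocks (by omega) (fun n : ℕ => (b : ℝ) ^ (-(α * n))) N).trans <|
      sum_congr rfl fun n _ => by rw [nsmul_eq_mul, natCast_pow_succ_sub_pow_mul_rpow (by omega)]
  simpa only [hblocks, div_eq_mul_inv] using hgeom
end

section
/- Let N = b^m for a prime b and m ∈ ℕ, let Z_N = {z ∈ {1,…,N−1} : gcd(z,N) = 1}, and let α > 1. Then for every n ∈ {1,…,N}, |(1/φ(N)) Σ_{z ∈ Z_N} Σ_{l ∈ ℤ\{0}} e^{2πi n z l / N}/|l|^α| ≤ 4ζ(α)/N · N/1, and moreover (1/N) Σ_{n=1}^{N} |(1/φ(N)) Σ_{z ∈ Z_N} Σ_{l ∈ ℤ\{0}} e^{2πi n z l / N}/|l|^α| ≤ 4ζ(α)/N. -/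
open scoped Real

/-- The Riemann zeta function for real `α > 1`, `ζ(α) = Σ_{n ≥ 1} n^{-α}`. -/
noncomputable def zetaR (α : ℝ) : ℝ := ∑' n : ℕ, (n : ℝ) ^ (-α)

/-- The reduced residues `Z_N = {z ∈ {1,…,N-1} : gcd(z,N)=1}`. -/
def ZN (N : ℕ) : Finset ℕ := (Finset.range N).filter fun z => 1 ≤ z ∧ Nat.gcd z N = 1

/-!
Write `T(n) = Σ_{z ∈ Z_N} Σ_{l ≠ 0} e(nzl/N) |l|^{-α}` and `Z = Σ_{l ≠ 0} |l|^{-α} = 2ζ(α)`.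
Each inner sum has modulus at most `Z`, so `|T(n)| ≤ φ(N) Z`: this is the pointwise bound.

For the average, let `N = p^{k+1}` and `M = p^k`. Exchanging the sums and evaluating Ramanujan's
sum `c_N(a) = N [N ∣ a] - M [M ∣ a]` gives `T(n) = Z (N (N/(N,n))^{-α} - M (M/(M,n))^{-α})`. When `N ∤ n` we have
`(N,n) = (M,n)`, and then `T(n) ≤ 0` because `x ↦ x^{1-α}` is decreasing. On the other hand
`Σ_{n=1}^N T(n) = Σ_z Σ_l |l|^{-α} N [N ∣ zl] ≥ 0` by orthogonality. If complex numbers have a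
nonnegative real sum and all but one of them are nonpositive reals, their moduli add up to at most
twice the modulus of the exceptional one; hence `Σ_n |T(n)| ≤ 2 |T(N)| ≤ 2 φ(N) Z`.
-/

open Finset
open scoped ComplexOrder Nat

-- The sum runs over all of `ℤ`: the `l = 0` term is `0 ^ (-α) = 0`.
theorem tsum_abs_int_rpow_neg_eq_two_mul_zetaR {α : ℝ} (hα : 1 < α) :
    ∑' l : ℤ, |(l : ℝ)| ^ (-α) = 2 * zetaR α := by
  have h0 : (0 : ℝ) ^ (-α) = 0 := Real.zero_rpow (by linarith)
  rw [tsum_int_eq_zero_add_two_mul_tsum_pnat (fun l => by simp) (Real.summable_abs_int_rpow hα)]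
  simp only [Int.cast_zero, abs_zero, h0, Int.cast_natCast, zero_add, nsmul_eq_mul, Nat.cast_ofNat]
  rw [tsum_pnat_eq_tsum_of_eq_zero (f := fun n : ℕ => |(n : ℝ)| ^ (-α)) (by simpa using h0)]
  simp [zetaR]

theorem Int.natCast_dvd_natCast_mul_iff_div_gcd {K n : ℕ} (hK : K ≠ 0) (l : ℤ) :
    (K : ℤ) ∣ n * l ↔ ((K / K.gcd n : ℕ) : ℤ) ∣ l := by
  obtain ⟨K', n', hcop, hK', hn'⟩ := Nat.exists_coprime K n
  set g := K.gcd n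
  have hg : g ≠ 0 := Nat.gcd_ne_zero_left hK
  have hKZ : (K : ℤ) = K' * g := by exact_mod_cast hK'
  have hnZ : (n : ℤ) = n' * g := by exact_mod_cast hn'
  rw [Nat.div_eq_of_eq_mul_left (Nat.pos_of_ne_zero hg) hK', hKZ, hnZ, mul_right_comm,
    mul_dvd_mul_iff_right (by exact_mod_cast hg)]
  have hcopZ : IsCoprime (K' : ℤ) n' := Nat.isCoprime_iff_coprime.2 hcop
  exact ⟨hcopZ.dvd_of_dvd_mul_left, fun h => h.mul_left _⟩

theorem Nat.gcd_prime_pow_succ_eq_of_not_dvd {p k n : ℕ} (hp : p.Prime)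
    (hn : ¬ p ^ (k + 1) ∣ n) :
    (p ^ (k + 1)).gcd n = (p ^ k).gcd n := by
  obtain ⟨j, hj, hg⟩ := (Nat.dvd_prime_pow hp).1 (Nat.gcd_dvd_left (p ^ (k + 1)) n)
  have hjk : j ≤ k := by
    by_contra! h
    exact hn (by rw [show k + 1 = j by omega, ← hg]; exact Nat.gcd_dvd_right _ _)
  refine Nat.dvd_antisymm (Nat.dvd_gcd ?_ (Nat.gcd_dvd_right _ _))
    (Nat.gcd_dvd_gcd_of_dvd_left _ (pow_dvd_pow p k.le_succ))
  rw [hg]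
  exact pow_dvd_pow p hjk

theorem hasSum_ite_dvd_abs_rpow {α : ℝ} (hα : 1 < α) {q : ℕ} (hq : q ≠ 0) :
    HasSum (fun l : ℤ => if (q : ℤ) ∣ l then |(l : ℝ)| ^ (-α) else 0)
      ((q : ℝ) ^ (-α) * ∑' l : ℤ, |(l : ℝ)| ^ (-α)) := by
  have hqZ : (q : ℤ) ≠ 0 := by exact_mod_cast hq
  have hcomp : (fun l : ℤ => if (q : ℤ) ∣ l then |(l : ℝ)| ^ (-α) else 0) ∘ ((q : ℤ) * ·) =
      fun u : ℤ => (q : ℝ) ^ (-α) * |(u : ℝ)| ^ (-α) := by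
    ext u
    simp [abs_mul, Real.mul_rpow]
  rw [← (mul_right_injective₀ hqZ).hasSum_iff, hcomp]
  · exact (Real.summable_abs_int_rpow hα).hasSum.mul_left _
  · rintro l hl
    rw [if_neg (mt (fun ⟨u, hu⟩ => ⟨u, hu.symm⟩) hl)]

theorem hasSum_ite_dvd_mul_abs_rpow {α : ℝ} (hα : 1 < α) {K : ℕ} (hK : K ≠ 0) (n : ℕ) :
    HasSum (fun l : ℤ => if (K : ℤ) ∣ n * l then |(l : ℝ)| ^ (-α) else 0)
      (((K / K.gcd n : ℕ) : ℝ) ^ (-α) * ∑' l : ℤ, |(l : ℝ)| ^ (-α)) := by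
  have hK0 : 0 < K := Nat.pos_of_ne_zero hK
  simp_rw [Int.natCast_dvd_natCast_mul_iff_div_gcd hK]
  exact hasSum_ite_dvd_abs_rpow hα
    (Nat.div_pos (Nat.gcd_le_left n hK0) (Nat.gcd_pos_of_pos_left n hK0)).ne'

theorem mul_mul_rpow_neg_le {x y c α : ℝ} (hx : 1 ≤ x) (hy : 0 ≤ y) (hc : 0 ≤ c)
    (hα : 1 ≤ α) :
    x * c * (x * y) ^ (-α) ≤ c * y ^ (-α) := by
  have hx1 : x * x ^ (-α) ≤ 1 := by
    calc x * x ^ (-α) ≤ x * x ^ (-1 : ℝ) := by gcongr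
      _ = 1 := by rw [Real.rpow_neg_one, mul_inv_cancel₀ (by linarith)]
  calc x * c * (x * y) ^ (-α) = (x * x ^ (-α)) * (c * y ^ (-α)) := by
        rw [Real.mul_rpow (by linarith) hy]; ring
    _ ≤ c * y ^ (-α) := mul_le_of_le_one_left (by positivity) hx1

theorem sum_norm_le_two_mul_norm {ι : Type*} {s : Finset ι} {a : ι} (ha : a ∈ s)
    {f : ι → ℂ} (hf : ∀ i ∈ s, i ≠ a → f i ≤ 0) (hsum : 0 ≤ ∑ i ∈ s, f i) :
    ∑ i ∈ s, ‖f i‖ ≤ 2 * ‖f a‖ := by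
  classical
  have hnorm : ∀ i ∈ s.erase a, ‖f i‖ = -(f i).re := fun i hi => by
    have hi' := neg_nonneg.2 (hf i (mem_of_mem_erase hi) (ne_of_mem_erase hi))
    rw [← norm_neg, ← Complex.re_eq_norm.2 hi', Complex.neg_re]
  rw [← add_sum_erase s _ ha, sum_congr rfl hnorm, sum_neg_distrib, ← Complex.re_sum]
  rw [← add_sum_erase s _ ha] at hsum
  have hre := (Complex.le_def.1 hsum).1
  simp only [Complex.zero_re, Complex.add_re] at hre
  linarith [Complex.re_le_norm (f a)]

theorem IsPrimitiveRoot.sum_range_zpow_mul {F : Type*} [Field F] {ζ : F} {K : ℕ}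
    (hζ : IsPrimitiveRoot ζ K) (a : ℤ) :
    ∑ i ∈ range K, ζ ^ (a * i) = if (K : ℤ) ∣ a then (K : F) else 0 := by
  simp only [zpow_mul, zpow_natCast]
  split_ifs with ha
  · simp [(hζ.zpow_eq_one_iff_dvd a).2 ha]
  · have hζK : (ζ ^ a) ^ K = 1 := by
      rw [← zpow_natCast, ← zpow_mul, mul_comm, zpow_mul, zpow_natCast, hζ.pow_eq_one, one_zpow]
    rw [geom_sum_eq (mt (hζ.zpow_eq_one_iff_dvd a).1 ha), hζK, sub_self, zero_div]

theorem IsPrimitiveRoot.sum_Icc_zpow_mul {F : Type*} [Field F] {ζ : F} {K : ℕ}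
    (hζ : IsPrimitiveRoot ζ K) (a : ℤ) :
    ∑ i ∈ Icc 1 K, ζ ^ (a * i) = if (K : ℤ) ∣ a then (K : F) else 0 := by
  obtain rfl | hK := eq_or_ne K 0
  · simp
  have hshift : ∀ i : ℕ, ζ ^ (a * ↑(1 + i)) = ζ ^ a * ζ ^ (a * i) := fun i => by
    rw [Nat.cast_add, Nat.cast_one, mul_add, mul_one, zpow_add₀ (hζ.ne_zero hK)]
  rw [← Ico_add_one_right_eq_Icc, sum_Ico_eq_sum_range, Nat.add_sub_cancel]
  simp_rw [hshift, ← mul_sum, hζ.sum_range_zpow_mul]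
  split_ifs with ha
  · rw [(hζ.zpow_eq_one_iff_dvd a).2 ha, one_mul]
  · rw [mul_zero]

theorem ZN_prime_pow_eq_filter_not_dvd {p k : ℕ} (hp : p.Prime) :
    ZN (p ^ (k + 1)) = (range (p ^ (k + 1))).filter (¬ p ∣ ·) := by
  ext z
  simp only [ZN, mem_filter, mem_range, and_congr_right_iff]
  intro hz
  rw [← Nat.coprime_iff_gcd_eq_one, Nat.coprime_comm, Nat.coprime_pow_left_iff k.succ_pos,
    hp.coprime_iff_not_dvd]
  constructor
  · exact fun h => h.2
  · intro h
    refine ⟨Nat.one_le_iff_ne_zero.2 ?_, h⟩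
    rintro rfl
    exact h (dvd_zero p)

theorem range_mul_filter_dvd_eq_map {p : ℕ} (hp : p ≠ 0) (M : ℕ) :
    (range (p * M)).filter (p ∣ ·) = (range M).map ⟨(p * ·), mul_right_injective₀ hp⟩ := by
  ext z
  simp only [mem_filter, mem_range, mem_map, Function.Embedding.coeFn_mk]
  constructor
  · rintro ⟨hz, w, rfl⟩
    exact ⟨w, lt_of_mul_lt_mul_left' hz, rfl⟩
  · rintro ⟨w, hw, rfl⟩
    exact ⟨Nat.mul_lt_mul_of_pos_left hw (Nat.pos_of_ne_zero hp), dvd_mul_right p w⟩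

theorem sum_ZN_prime_pow_zpow_mul {F : Type*} [Field F] {p k : ℕ} (hp : p.Prime) {ζ : F}
    (hζ : IsPrimitiveRoot ζ (p ^ (k + 1))) (a : ℤ) :
    ∑ z ∈ ZN (p ^ (k + 1)), ζ ^ (a * z) =
      (if ((p ^ (k + 1) : ℕ) : ℤ) ∣ a then ((p ^ (k + 1) : ℕ) : F) else 0) -
        (if ((p ^ k : ℕ) : ℤ) ∣ a then ((p ^ k : ℕ) : F) else 0) := by
  have hζp : IsPrimitiveRoot (ζ ^ p) (p ^ k) := hζ.pow (pow_pos hp.pos _) (by ring)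
  have hmul : ∑ z ∈ (range (p ^ (k + 1))).filter (p ∣ ·), ζ ^ (a * z) =
      ∑ w ∈ range (p ^ k), (ζ ^ p) ^ (a * w) := by
    rw [pow_succ', range_mul_filter_dvd_eq_map hp.ne_zero, sum_map]
    refine sum_congr rfl fun w _ => ?_
    simp only [Function.Embedding.coeFn_mk, Nat.cast_mul, ← zpow_natCast, ← zpow_mul]
    ring_nf
  rw [← hζ.sum_range_zpow_mul, ← hζp.sum_range_zpow_mul, ← hmul,
    ZN_prime_pow_eq_filter_not_dvd hp,
    ← sum_filter_add_sum_filter_not (range (p ^ (k + 1))) (p ∣ ·), add_sub_cancel_left]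

theorem norm_zpow_mul_abs_rpow {ζ : ℂ} (hζ : ‖ζ‖ = 1) (a l : ℤ) (α : ℝ) :
    ‖ζ ^ a * ((|(l : ℝ)| ^ (-α) : ℝ) : ℂ)‖ = |(l : ℝ)| ^ (-α) := by
  rw [norm_mul, norm_zpow, hζ, one_zpow, one_mul, Complex.norm_of_nonneg (by positivity)]

theorem summable_zpow_mul_abs_rpow {ζ : ℂ} (hζ : ‖ζ‖ = 1) {α : ℝ} (hα : 1 < α) (e : ℤ → ℤ) :
    Summable fun l : ℤ => ζ ^ e l * ((|(l : ℝ)| ^ (-α) : ℝ) : ℂ) :=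
  (Real.summable_abs_int_rpow hα).of_norm_bounded fun l => (norm_zpow_mul_abs_rpow hζ _ l α).le

noncomputable def latticeSum (N : ℕ) (α : ℝ) (n : ℕ) : ℂ :=
  ∑ z ∈ ZN N, ∑' l : ℤ, if l = 0 then (0 : ℂ) else
    Complex.exp (2 * π * Complex.I * n * z * l / (N : ℕ)) * (|(l : ℝ)| ^ (-α) : ℝ)

section latticeSum

variable {N : ℕ} {α : ℝ}

theorem norm_exp_two_pi_I_div (N : ℕ) : ‖Complex.exp (2 * π * Complex.I / N)‖ = 1 := by
  simp [Complex.norm_exp]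

theorem latticeSum_eq_sum_tsum_zpow (hα : α ≠ 0) (n : ℕ) :
    latticeSum N α n = ∑ z ∈ ZN N, ∑' l : ℤ,
      Complex.exp (2 * π * Complex.I / N) ^ ((n : ℤ) * z * l) * ((|(l : ℝ)| ^ (-α) : ℝ) : ℂ) := by
  refine sum_congr rfl fun z _ => tsum_congr fun l => ?_
  split_ifs with hl
  · simp [hl, Real.zero_rpow (neg_ne_zero.2 hα)]
  · rw [← Complex.exp_int_mul]
    push_cast
    ring_nf

theorem norm_latticeSum_le (hα : 1 < α) (n : ℕ) :
    ‖latticeSum N α n‖ ≤ φ N * ∑' l : ℤ, |(l : ℝ)| ^ (-α) := by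
  have hterm : ∀ z ∈ ZN N, ‖∑' l : ℤ, Complex.exp (2 * π * Complex.I / N) ^ ((n : ℤ) * z * l) *
      ((|(l : ℝ)| ^ (-α) : ℝ) : ℂ)‖ ≤ ∑' l : ℤ, |(l : ℝ)| ^ (-α) := fun z _ =>
    tsum_of_norm_bounded (Real.summable_abs_int_rpow hα).hasSum fun l =>
      (norm_zpow_mul_abs_rpow (norm_exp_two_pi_I_div N) _ l α).le
  have hcard : #(ZN N) ≤ φ N := by
    rw [Nat.totient_eq_card_coprime]
    refine card_le_card fun z hz => ?_
    simp only [ZN, mem_filter] at hz ⊢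
    exact ⟨hz.1, Nat.coprime_comm.1 hz.2.2⟩
  rw [latticeSum_eq_sum_tsum_zpow (by linarith)]
  calc _ ≤ _ := norm_sum_le _ _
    _ ≤ #(ZN N) • ∑' l : ℤ, |(l : ℝ)| ^ (-α) := sum_le_card_nsmul _ _ _ hterm
    _ ≤ φ N * ∑' l : ℤ, |(l : ℝ)| ^ (-α) := by
      rw [nsmul_eq_mul]
      gcongr

theorem norm_one_div_totient_mul_latticeSum_le (hα : 1 < α) (n : ℕ) :
    ‖(1 / (φ N : ℂ)) * latticeSum N α n‖ ≤ ∑' l : ℤ, |(l : ℝ)| ^ (-α) := by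
  rw [norm_mul, norm_div, norm_one, Complex.norm_natCast]
  obtain h | h := eq_or_ne (φ N) 0
  · rw [h, Nat.cast_zero, div_zero, zero_mul]
    exact tsum_nonneg fun l => by positivity
  · rw [one_div_mul_eq_div, div_le_iff₀' (by positivity)]
    exact norm_latticeSum_le hα n

theorem sum_Icc_latticeSum_nonneg (hN : N ≠ 0) (hα : 1 < α) :
    0 ≤ ∑ n ∈ Icc 1 N, latticeSum N α n := by
  have hζ := Complex.isPrimitiveRoot_exp N hN
  simp_rw [latticeSum_eq_sum_tsum_zpow (show α ≠ 0 by linarith)]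
  rw [sum_comm]
  refine sum_nonneg fun z _ => ?_
  rw [← Summable.tsum_finsetSum fun n _ =>
    summable_zpow_mul_abs_rpow (norm_exp_two_pi_I_div N) hα _]
  refine tsum_nonneg fun l => ?_
  have hexp : ∀ n : ℕ, (n : ℤ) * z * l = z * l * n := fun n => by ring
  simp_rw [hexp, ← sum_mul, hζ.sum_Icc_zpow_mul]
  refine mul_nonneg ?_ (Complex.zero_le_real.2 (by positivity))
  split_ifs
  · exact Nat.cast_nonneg _
  · exact le_rfl

theorem latticeSum_prime_pow {p k : ℕ} (hp : p.Prime) (hα : 1 < α) (n : ℕ) :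
    latticeSum (p ^ (k + 1)) α n =
      ((((p ^ (k + 1) : ℕ) : ℝ) * ((p ^ (k + 1) / (p ^ (k + 1)).gcd n : ℕ) : ℝ) ^ (-α) -
        ((p ^ k : ℕ) : ℝ) * ((p ^ k / (p ^ k).gcd n : ℕ) : ℝ) ^ (-α)) *
          ∑' l : ℤ, |(l : ℝ)| ^ (-α) : ℝ) := by
  have hN : p ^ (k + 1) ≠ 0 := pow_ne_zero _ hp.ne_zero
  have hζ := Complex.isPrimitiveRoot_exp _ hN
  have hterm : ∀ l : ℤ, ∑ z ∈ ZN (p ^ (k + 1)),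
      Complex.exp (2 * π * Complex.I / (p ^ (k + 1) : ℕ)) ^ ((n : ℤ) * z * l) *
        ((|(l : ℝ)| ^ (-α) : ℝ) : ℂ) =
      (((p ^ (k + 1) : ℕ) * (if ((p ^ (k + 1) : ℕ) : ℤ) ∣ n * l then |(l : ℝ)| ^ (-α) else 0) -
        (p ^ k : ℕ) * (if ((p ^ k : ℕ) : ℤ) ∣ n * l then |(l : ℝ)| ^ (-α) else 0) : ℝ) : ℂ) := by
    intro l
    have hexp : ∀ z : ℕ, (n : ℤ) * z * l = n * l * z := fun z => by ring
    simp_rw [hexp, ← sum_mul, sum_ZN_prime_pow_zpow_mul hp hζ]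
    split_ifs <;> push_cast <;> ring
  have hsum := ((hasSum_ite_dvd_mul_abs_rpow hα hN n).mul_left ((p ^ (k + 1) : ℕ) : ℝ)).sub
    ((hasSum_ite_dvd_mul_abs_rpow hα (pow_ne_zero k hp.ne_zero) n).mul_left ((p ^ k : ℕ) : ℝ))
  rw [latticeSum_eq_sum_tsum_zpow (by linarith), ← Summable.tsum_finsetSum fun z _ =>
    summable_zpow_mul_abs_rpow (norm_exp_two_pi_I_div _) hα _, tsum_congr hterm,
    (Complex.hasSum_ofReal.2 hsum).tsum_eq]
  push_cast
  ring

theorem latticeSum_nonpos {p m n : ℕ} (hp : p.Prime) (hα : 1 < α) (hn : ¬ p ^ m ∣ n) :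
    latticeSum (p ^ m) α n ≤ 0 := by
  obtain ⟨k, rfl⟩ : ∃ k, m = k + 1 :=
    Nat.exists_eq_add_one_of_ne_zero (by rintro rfl; exact hn (by simp))
  rw [latticeSum_prime_pow hp hα, Nat.gcd_prime_pow_succ_eq_of_not_dvd hp hn, pow_succ',
    Nat.mul_div_assoc p (Nat.gcd_dvd_left _ _), ← Complex.ofReal_zero, Complex.real_le_real]
  refine mul_nonpos_of_nonpos_of_nonneg (sub_nonpos.2 ?_) (tsum_nonneg fun l => by positivity)
  simp only [Nat.cast_mul]
  exact mul_mul_rpow_neg_le (by exact_mod_cast hp.one_le) (Nat.cast_nonneg _) (Nat.cast_nonneg _)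
    hα.le

theorem sum_Icc_norm_latticeSum_le {p m : ℕ} (hp : p.Prime) (hα : 1 < α) :
    ∑ n ∈ Icc 1 (p ^ m), ‖latticeSum (p ^ m) α n‖ ≤ 2 * ‖latticeSum (p ^ m) α (p ^ m)‖ := by
  refine sum_norm_le_two_mul_norm (right_mem_Icc.2 (Nat.one_le_pow _ _ hp.pos))
    (fun n hn hne => latticeSum_nonpos hp hα ?_)
    (sum_Icc_latticeSum_nonneg (pow_ne_zero m hp.ne_zero) hα)
  rw [mem_Icc] at hn
  exact Nat.not_dvd_of_pos_of_lt hn.1 (hn.2.lt_of_ne hne)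

end latticeSum

theorem lattice_character_sum_bound_general (b m : ℕ) (hb : Nat.Prime b)
    (α : ℝ) (hα : 1 < α) :
    (∀ n ∈ Finset.Icc 1 (b ^ m),
      ‖(1 / (Nat.totient (b ^ m) : ℂ)) * ∑ z ∈ ZN (b ^ m),
          ∑' l : ℤ, if l = 0 then (0 : ℂ) else
            Complex.exp (2 * Real.pi * Complex.I * n * z * l / (b ^ m : ℕ)) *
              (|(l : ℝ)| ^ (-α) : ℝ)‖ ≤ 4 * zetaR α) ∧
    (1 / ((b : ℝ) ^ m)) * ∑ n ∈ Finset.Icc 1 (b ^ m),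
        ‖(1 / (Nat.totient (b ^ m) : ℂ)) * ∑ z ∈ ZN (b ^ m),
          ∑' l : ℤ, if l = 0 then (0 : ℂ) else
            Complex.exp (2 * Real.pi * Complex.I * n * z * l / (b ^ m : ℕ)) *
              (|(l : ℝ)| ^ (-α) : ℝ)‖
      ≤ 4 * zetaR α / (b : ℝ) ^ m := by
  set S : ℕ → ℂ := fun n => (1 / (φ (b ^ m) : ℂ)) * latticeSum (b ^ m) α n
  change (∀ n ∈ Icc 1 (b ^ m), ‖S n‖ ≤ 4 * zetaR α) ∧
    1 / (b : ℝ) ^ m * ∑ n ∈ Icc 1 (b ^ m), ‖S n‖ ≤ 4 * zetaR α / (b : ℝ) ^ m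
  have hS : ∀ n, ‖S n‖ ≤ 2 * zetaR α := fun n =>
    (norm_one_div_totient_mul_latticeSum_le hα n).trans
      (tsum_abs_int_rpow_neg_eq_two_mul_zetaR hα).le
  have hzeta : 0 ≤ zetaR α := tsum_nonneg fun n => by positivity
  have hsum : ∑ n ∈ Icc 1 (b ^ m), ‖S n‖ ≤ 2 * ‖S (b ^ m)‖ := by
    simp only [S, norm_mul, ← mul_sum]
    rw [mul_left_comm]
    exact mul_le_mul_of_nonneg_left (sum_Icc_norm_latticeSum_le hb hα) (norm_nonneg _)
  refine ⟨fun n _ => (hS n).trans (by linarith), ?_⟩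
  rw [one_div_mul_eq_div, div_le_div_iff_of_pos_right (pow_pos (by exact_mod_cast hb.pos) m)]
  linarith [hS (b ^ m)]

/-- For `N = b^m` with `b` prime and `α > 1`: for every `n ∈ {1,…,N}`,
`|(1/φ(N)) Σ_{z ∈ Z_N} Σ_{l ≠ 0} e^{2πi n z l/N}/|l|^α| ≤ 4ζ(α)`, and the average over
`n = 1,…,N` of these quantities is at most `4ζ(α)/N`. -/
theorem lattice_character_sum_bound (b m : ℕ) (hb : Nat.Prime b) (hm : 0 < m)
    (α : ℝ) (hα : 1 < α) :
    (∀ n ∈ Finset.Icc 1 (b ^ m),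
      ‖(1 / (Nat.totient (b ^ m) : ℂ)) * ∑ z ∈ ZN (b ^ m),
          ∑' l : ℤ, if l = 0 then (0 : ℂ) else
            Complex.exp (2 * Real.pi * Complex.I * n * z * l / (b ^ m : ℕ)) *
              (|(l : ℝ)| ^ (-α) : ℝ)‖ ≤ 4 * zetaR α) ∧
    (1 / ((b : ℝ) ^ m)) * ∑ n ∈ Finset.Icc 1 (b ^ m),
        ‖(1 / (Nat.totient (b ^ m) : ℂ)) * ∑ z ∈ ZN (b ^ m),
          ∑' l : ℤ, if l = 0 then (0 : ℂ) else
            Complex.exp (2 * Real.pi * Complex.I * n * z * l / (b ^ m : ℕ)) *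
              (|(l : ℝ)| ^ (-α) : ℝ)‖
      ≤ 4 * zetaR α / (b : ℝ) ^ m :=
  lattice_character_sum_bound_general b m hb α hα
end
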